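/- Let G be a symmetric generalized Hadamard matrix and γ : V(n,q) → ℂ a function of the form γ(x) = Σ_{s ∈ V(n,q)} α_s · MG(x;s) with coefficients α_s ∈ ℂ. Then for every ℓ ∈ V(n,q): α_ℓ = q^{-n} · Σ_{i ∈ V(n,q)} γ(i) · conj(MG(ℓ;i)). -/

import Mathlib

open Finset

/-- `V n q` is the set of weak compositions of `n` into `q` parts. -/
def V (n q : ℕ) : Finset (Fin q → ℕ) :=
  (Fintype.piFinset fun _ : Fin q => Finset.range (n + 1)).filter fun p => ∑ i, p i = n

open scoped Classical in
/-- The m-polynomial `MG(p; s)` with respect to the matrix `G`. -/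
noncomputable def MG {q : ℕ} (n : ℕ) (G : Matrix (Fin q) (Fin q) ℂ)
    (p s : Fin q → ℕ) : ℂ :=
  ∑ r ∈ (Fintype.piFinset fun _ : Fin q => Fintype.piFinset fun _ : Fin q =>
      Finset.range (n + 1)).filter
      (fun r => (∀ i, ∑ j, r i j = s i) ∧ (∀ j, ∑ i, r i j = p j)),
    ((∏ i, Nat.factorial (s i) : ℕ) : ℂ) / ((∏ i, ∏ j, Nat.factorial (r i j) : ℕ) : ℂ) *
      ∏ i, ∏ j, G i j ^ r i j

/-!
Up to the factor `s! / p!`, `MG(p; s)` is the coefficient of `x^s` in `∏ⱼ (∑ᵢ gᵢⱼ xᵢ)^{pⱼ}`, i.e. an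
entry of the matrix by which `G` acts on homogeneous polynomials of degree `n`. This action is
multiplicative, because substituting the linear forms of `A` into those of `B` gives the linear forms
of `A * B`, and the factorials cancel along products. As `G` is symmetric, `conj MG_G = MG_{Gᴴ}`, so
`∑ᵢ MG(i; s) conj MG(ℓ; i)` is an entry of `MG_{G Gᴴ} = MG_{q • 1}`, namely `qⁿ δ_{sℓ}`; this
orthogonality inverts `γ = ∑ₛ αₛ MG(·; s)`.
-/

open MvPolynomial

section SymmetricPower

variable {σ R : Type*} [CommSemiring R]

theorem prod_monomial {ι : Type*} (s : Finset ι) (f : ι → σ →₀ ℕ) (a : ι → R) :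
    ∏ i ∈ s, monomial (f i) (a i) = monomial (∑ i ∈ s, f i) (∏ i ∈ s, a i) := by
  classical
  induction s using Finset.induction_on with
  | empty => simp
  | insert i s hi ih => rw [prod_insert hi, prod_insert hi, sum_insert hi, ih, monomial_mul]

variable [Fintype σ]

noncomputable def toFinsupp : (σ → ℕ) ≃+ (σ →₀ ℕ) := Finsupp.addEquivFunOnFinite.symm

@[simp]
theorem toFinsupp_apply (s : σ → ℕ) (i : σ) : toFinsupp s i = s i := rfl

@[simp]
theorem toFinsupp_symm_apply (v : σ →₀ ℕ) : toFinsupp.symm v = ⇑v := rfl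

theorem prod_monomial_single_pow (k : σ → ℕ) (a : σ → R) :
    ∏ i, monomial (Finsupp.single i 1) (a i) ^ k i = monomial (toFinsupp k) (∏ i, a i ^ k i) := by
  classical
  have hexp : ∑ i, k i • Finsupp.single i 1 = toFinsupp k := by
    ext i
    simp [Finsupp.finsetSum_apply, Finsupp.single_apply]
  simp only [monomial_pow, prod_monomial, hexp]

noncomputable def linForm (A : Matrix σ σ R) (j : σ) : MvPolynomial σ R :=
  ∑ i, C (A i j) * X i

noncomputable def symPowCoeff (A : Matrix σ σ R) (p s : σ → ℕ) : R :=
  coeff (toFinsupp s) (∏ j, linForm A j ^ p j)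

theorem aeval_linForm (A B : Matrix σ σ R) (j : σ) :
    aeval (linForm A) (linForm B j) = linForm (A * B) j := by
  simp only [linForm, map_sum, map_mul, aeval_C, aeval_X, algebraMap_eq, mul_sum, Matrix.mul_apply,
    sum_mul]
  rw [sum_comm]
  exact sum_congr rfl fun _ _ => sum_congr rfl fun _ _ => by ring

theorem aeval_prod_linForm_pow (A B : Matrix σ σ R) (p : σ → ℕ) :
    aeval (linForm A) (∏ j, linForm B j ^ p j) = ∏ j, linForm (A * B) j ^ p j := by
  simp only [map_prod, map_pow, aeval_linForm]

theorem linForm_pow [DecidableEq σ] (A : Matrix σ σ R) (j : σ) (m : ℕ) :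
    linForm A j ^ m = ∑ k ∈ univ.piAntidiag m,
      monomial (toFinsupp k) (Nat.multinomial univ k * ∏ i, A i j ^ k i) := by
  rw [linForm, sum_pow_eq_sum_piAntidiag]
  refine sum_congr rfl fun k _ => ?_
  simp only [C_mul_X_eq_monomial, prod_monomial_single_pow, ← C_mul_monomial, map_natCast]

theorem symPowCoeff_smul_one [DecidableEq σ] (c : R) (p s : σ → ℕ) :
    symPowCoeff (c • (1 : Matrix σ σ R)) p s = if s = p then c ^ ∑ j, p j else 0 := by
  have hlin : ∀ j, linForm (c • (1 : Matrix σ σ R)) j = monomial (Finsupp.single j 1) c := by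
    intro j
    rw [← C_mul_X_eq_monomial]
    simp [linForm, Matrix.one_apply, apply_ite C, ite_mul]
  simp only [symPowCoeff, hlin, prod_monomial_single_pow (a := fun _ => c), prod_pow_eq_pow_sum,
    coeff_monomial, toFinsupp.injective.eq_iff, eq_comm]

theorem isHomogeneous_linForm (A : Matrix σ σ R) (j : σ) : (linForm A j).IsHomogeneous 1 :=
  IsHomogeneous.sum _ _ 1 fun i _ => isHomogeneous_C_mul_X (A i j) i

theorem isHomogeneous_prod_linForm_pow (A : Matrix σ σ R) (p : σ → ℕ) :
    (∏ j, linForm A j ^ p j).IsHomogeneous (∑ j, p j) := by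
  refine IsHomogeneous.prod _ _ _ fun j _ => ?_
  simpa only [one_mul] using (isHomogeneous_linForm A j).pow (p j)

end SymmetricPower

section Compositions

variable {R : Type*} [CommSemiring R] {q n : ℕ}

theorem mem_V_iff {p : Fin q → ℕ} : p ∈ V n q ↔ ∑ i, p i = n := by
  simp only [V, mem_filter, Fintype.mem_piFinset, mem_range, Nat.lt_succ_iff, and_iff_right_iff_imp]
  rintro rfl i
  exact single_le_sum (fun j _ => Nat.zero_le (p j)) (mem_univ i)

theorem eq_sum_V_of_isHomogeneous {P : MvPolynomial (Fin q) R} (hP : P.IsHomogeneous n) :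
    P = ∑ i ∈ V n q, monomial (toFinsupp i) (coeff (toFinsupp i) P) := by
  calc P = ∑ v ∈ P.support, monomial v (coeff v P) := P.as_sum
    _ = ∑ v ∈ (V n q).map toFinsupp.toEquiv.toEmbedding, monomial v (coeff v P) := by
      refine sum_subset (fun v hv => mem_map.mpr ⟨toFinsupp.symm v, mem_V_iff.mpr ?_,
        toFinsupp.apply_symm_apply v⟩) fun v _ hv => by rw [notMem_support_iff.mp hv, monomial_zero]
      simpa [← Finsupp.degree_eq_sum, Finsupp.degree_apply] using
        (hP.degree_eq_sum_deg_support hv).symm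
    _ = _ := sum_map _ _ _

theorem symPowCoeff_mul (A B : Matrix (Fin q) (Fin q) R) {ℓ : Fin q → ℕ} (hℓ : ∑ j, ℓ j = n)
    (s : Fin q → ℕ) :
    symPowCoeff (A * B) ℓ s = ∑ i ∈ V n q, symPowCoeff B ℓ i * symPowCoeff A i s := by
  have hexp := eq_sum_V_of_isHomogeneous (hℓ ▸ isHomogeneous_prod_linForm_pow B ℓ)
  rw [symPowCoeff, ← aeval_prod_linForm_pow, hexp, map_sum, coeff_sum]
  refine sum_congr rfl fun i _ => ?_
  rw [aeval_monomial, algebraMap_eq, coeff_C_mul, Finsupp.prod_fintype _ _ fun j => pow_zero _]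
  rfl

end Compositions

section Tables

variable {R : Type*} [CommSemiring R] {q : ℕ}

-- The index set of the sum defining `MG`, so that `MG n G p s` unfolds to a sum over `tables n p s`.
open scoped Classical in
noncomputable def tables (n : ℕ) (p s : Fin q → ℕ) : Finset (Fin q → Fin q → ℕ) :=
  (Fintype.piFinset fun _ : Fin q => Fintype.piFinset fun _ : Fin q =>
      Finset.range (n + 1)).filter
      (fun r => (∀ i, ∑ j, r i j = s i) ∧ (∀ j, ∑ i, r i j = p j))

theorem mem_tables {n : ℕ} {p : Fin q → ℕ} (hp : ∑ j, p j = n) {s : Fin q → ℕ}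
    {r : Fin q → Fin q → ℕ} :
    r ∈ tables n p s ↔ (∀ i, ∑ j, r i j = s i) ∧ (∀ j, ∑ i, r i j = p j) := by
  simp only [tables, mem_filter, Fintype.mem_piFinset, mem_range, Nat.lt_succ_iff,
    and_iff_right_iff_imp]
  rintro ⟨-, hcol⟩ i j
  calc r i j ≤ ∑ i', r i' j := single_le_sum (f := (r · j)) (fun _ _ => Nat.zero_le _) (mem_univ i)
    _ = p j := hcol j
    _ ≤ n := hp ▸ single_le_sum (fun _ _ => Nat.zero_le _) (mem_univ j)

theorem symPowCoeff_eq_sum_tables (A : Matrix (Fin q) (Fin q) R) {n : ℕ} {p : Fin q → ℕ}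
    (hp : ∑ j, p j = n) (s : Fin q → ℕ) :
    symPowCoeff A p s = ∑ r ∈ tables n p s,
      ((∏ j, Nat.multinomial univ fun i => r i j : ℕ) : R) * ∏ i, ∏ j, A i j ^ r i j := by
  classical
  simp only [symPowCoeff, linForm_pow, prod_univ_sum, prod_monomial, ← map_sum, coeff_sum,
    coeff_monomial, toFinsupp.injective.eq_iff, ← sum_filter]
  -- A term of the expansion picks an exponent vector `x j` from the `j`-th factor: `x` is the
  -- transpose of a table.
  have mem_expansion_index : ∀ x : Fin q → Fin q → ℕ,
      x ∈ {x ∈ Fintype.piFinset fun j => (univ : Finset (Fin q)).piAntidiag (p j) |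
          ∑ j, x j = s} ↔
        (∀ j, ∑ i, x j i = p j) ∧ ∀ i, ∑ j, x j i = s i := by
    simp [Fintype.mem_piFinset, mem_piAntidiag, funext_iff, Finset.sum_apply]
  refine sum_nbij' (fun x i j => x j i) (fun r j i => r i j) (fun x hx => ?_) (fun r hr => ?_)
    (fun _ _ => rfl) (fun _ _ => rfl) fun x _ => ?_
  · rw [mem_expansion_index] at hx
    exact (mem_tables hp).mpr hx.symm
  · rw [mem_tables hp] at hr
    exact (mem_expansion_index _).mpr hr.symm
  · rw [prod_mul_distrib, prod_comm (s := univ) (t := univ) (f := fun j i => A i j ^ x j i)]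
    push_cast
    rfl

end Tables

section MG

variable {q n : ℕ}

theorem MG_eq_symPowCoeff (G : Matrix (Fin q) (Fin q) ℂ) {p : Fin q → ℕ} (hp : ∑ j, p j = n)
    (s : Fin q → ℕ) :
    MG n G p s = ((∏ i, (s i).factorial : ℕ) : ℂ) / ((∏ j, (p j).factorial : ℕ) : ℂ) *
      symPowCoeff G p s := by
  rw [symPowCoeff_eq_sum_tables G hp, mul_sum]
  refine sum_congr rfl fun r hr => ?_
  have hcol := ((mem_tables hp).mp hr).2
  have hfact : ∏ j, (p j).factorial =
      (∏ i, ∏ j, (r i j).factorial) * ∏ j, Nat.multinomial univ fun i => r i j := by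
    rw [prod_comm, ← prod_mul_distrib]
    exact prod_congr rfl fun j _ => by rw [Nat.multinomial_spec, hcol j]
  have hr_ne : ((∏ i, ∏ j, (r i j).factorial : ℕ) : ℂ) ≠ 0 := Nat.cast_ne_zero.mpr (by positivity)
  have hm_ne : ((∏ j, Nat.multinomial univ fun i => r i j : ℕ) : ℂ) ≠ 0 :=
    Nat.cast_ne_zero.mpr (prod_ne_zero_iff.mpr fun j _ => (Nat.multinomial_pos _ _).ne')
  rw [hfact, Nat.cast_mul]
  field_simp

theorem MG_mul (A B : Matrix (Fin q) (Fin q) ℂ) {ℓ : Fin q → ℕ} (hℓ : ∑ j, ℓ j = n)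
    (s : Fin q → ℕ) : MG n (A * B) ℓ s = ∑ i ∈ V n q, MG n A i s * MG n B ℓ i := by
  rw [MG_eq_symPowCoeff _ hℓ, symPowCoeff_mul A B hℓ, mul_sum]
  refine sum_congr rfl fun i hi => ?_
  rw [MG_eq_symPowCoeff A (mem_V_iff.mp hi), MG_eq_symPowCoeff B hℓ]
  have : ((∏ j, (i j).factorial : ℕ) : ℂ) ≠ 0 := Nat.cast_ne_zero.mpr (by positivity)
  field_simp

theorem MG_smul_one (c : ℂ) {ℓ : Fin q → ℕ} (hℓ : ∑ j, ℓ j = n)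
    (s : Fin q → ℕ) : MG n (c • 1) ℓ s = if s = ℓ then c ^ n else 0 := by
  rw [MG_eq_symPowCoeff _ hℓ, symPowCoeff_smul_one, hℓ]
  split_ifs with h
  · subst h
    rw [div_self (Nat.cast_ne_zero.mpr (by positivity)), one_mul]
  · rw [mul_zero]

theorem conj_MG (G : Matrix (Fin q) (Fin q) ℂ) (p s : Fin q → ℕ) :
    starRingEnd ℂ (MG n G p s) = MG n (G.map (starRingEnd ℂ)) p s := by
  simp [MG, map_sum, map_prod]

theorem MG_orthogonal {G : Matrix (Fin q) (Fin q) ℂ} (hsymm : ∀ i j, G i j = G j i)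
    (hG : G * G.conjTranspose = (q : ℂ) • 1) {ℓ : Fin q → ℕ} (hℓ : ℓ ∈ V n q) (s : Fin q → ℕ) :
    ∑ i ∈ V n q, MG n G i s * starRingEnd ℂ (MG n G ℓ i) = if s = ℓ then (q : ℂ) ^ n else 0 := by
  have hconj : G.map (starRingEnd ℂ) = G.conjTranspose := by
    ext i j
    simp [Matrix.conjTranspose_apply, hsymm i j]
  simp only [conj_MG, hconj]
  rw [← MG_mul _ _ (mem_V_iff.mp hℓ), hG, MG_smul_one _ (mem_V_iff.mp hℓ)]

end MG

theorem stmt7_general (q n : ℕ)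
    (G : Matrix (Fin q) (Fin q) ℂ) (hsymm : ∀ i j, G i j = G j i)
    (hG : G * G.conjTranspose = (q : ℂ) • 1)
    (γ α : (Fin q → ℕ) → ℂ)
    (hγ : ∀ x ∈ V n q, γ x = ∑ s ∈ V n q, α s * MG n G x s)
    (ℓ : Fin q → ℕ) (hℓ : ℓ ∈ V n q) :
    α ℓ = ((q : ℂ) ^ n)⁻¹ * ∑ i ∈ V n q, γ i * (starRingEnd ℂ) (MG n G ℓ i) := by
  have hqn : (q : ℂ) ^ n ≠ 0 := by
    rcases q.eq_zero_or_pos with rfl | hq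
    · obtain rfl : n = 0 := by simpa using (mem_V_iff.mp hℓ).symm
      simp
    · exact pow_ne_zero _ (by exact_mod_cast hq.ne')
  have hsum : ∑ i ∈ V n q, γ i * starRingEnd ℂ (MG n G ℓ i) = α ℓ * (q : ℂ) ^ n :=
    calc ∑ i ∈ V n q, γ i * starRingEnd ℂ (MG n G ℓ i)
        = ∑ s ∈ V n q, α s * ∑ i ∈ V n q, MG n G i s * starRingEnd ℂ (MG n G ℓ i) := by
          simp only [mul_sum]
          rw [sum_comm]
          refine sum_congr rfl fun i hi => ?_
          simp only [hγ i hi, sum_mul, mul_assoc]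
      _ = α ℓ * (q : ℂ) ^ n := by
          simp only [MG_orthogonal hsymm hG hℓ, mul_ite, mul_zero, sum_ite_eq', if_pos hℓ]
  rw [hsum]
  field_simp

theorem stmt7 (q n : ℕ) (hq : 2 ≤ q) (hn : 0 < n)
    (G : Matrix (Fin q) (Fin q) ℂ) (hsymm : ∀ i j, G i j = G j i)
    (hG : G * G.conjTranspose = (q : ℂ) • 1)
    (γ α : (Fin q → ℕ) → ℂ)
    (hγ : ∀ x ∈ V n q, γ x = ∑ s ∈ V n q, α s * MG n G x s)
    (ℓ : Fin q → ℕ) (hℓ : ℓ ∈ V n q) :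
    α ℓ = ((q : ℂ) ^ n)⁻¹ * ∑ i ∈ V n q, γ i * (starRingEnd ℂ) (MG n G ℓ i) :=
  stmt7_general q n G hsymm hG γ α hγ ℓ hℓ
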